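/- arXiv:1611.05638 — 3 statements merged into one kernel-verified Lean document; each statement's English description precedes it below -/
import Mathlib

section
/- In a finite ordinal potential game, every maximal improvement path terminates at a pure Nash equilibrium; equivalently, the best-reply (better-reply) dynamics cannot cycle, so the game has the finite improvement property and possesses a pure Nash equilibrium. -/
/-- In a finite ordinal potential game, improvement dynamics cannot cycle
(no infinite improvement path), any joint action admitting no improvement step
is a pure Nash equilibrium, and a pure Nash equilibrium exists. -/
theorem stmt_4 {ι : Type*} [Fintype ι] [DecidableEq ι]
    {S : ι → Type*} [∀ i, Fintype (S i)] [∀ i, Nonempty (S i)]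
    (r : ι → (∀ i, S i) → ℝ) (φ : (∀ i, S i) → ℝ)
    (hord : ∀ (i : ι) (s : ∀ i, S i) (a b : S i),
      (r i (Function.update s i b) < r i (Function.update s i a) ↔
        φ (Function.update s i b) < φ (Function.update s i a)))
    (Step : (∀ i, S i) → (∀ i, S i) → Prop)
    (hStep : ∀ s t, Step s t ↔
      ∃ (i : ι) (a : S i), t = Function.update s i a ∧ r i s < r i t) :
    (¬ ∃ f : ℕ → (∀ i, S i), ∀ n, Step (f n) (f (n + 1))) ∧
    (∀ s : ∀ i, S i, (¬ ∃ t, Step s t) →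
      ∀ (i : ι) (a : S i), r i (Function.update s i a) ≤ r i s) ∧
    (∃ s : ∀ i, S i, ∀ (i : ι) (a : S i), r i (Function.update s i a) ≤ r i s) := by
  have key : ∀ s t, Step s t → φ s < φ t := by
    intro s t hst
    obtain ⟨i, a, ht, hr⟩ := (hStep s t).1 hst
    have hr' : r i (Function.update s i (s i)) < r i (Function.update s i a) := by
      simpa [Function.update_eq_self, ht] using hr
    have := (hord i s a (s i)).1 hr'
    simpa [Function.update_eq_self, ht] using this
  -- Nash from maximizer of φ
  have nash : ∃ s : ∀ i, S i, ∀ (i : ι) (a : S i), r i (Function.update s i a) ≤ r i s := by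
    obtain ⟨s, hs⟩ := Finite.exists_max φ
    refine ⟨s, fun i a => ?_⟩
    by_contra h
    push_neg at h
    have : Step s (Function.update s i a) := (hStep _ _).2 ⟨i, a, rfl, h⟩
    exact absurd (hs (Function.update s i a)) (not_le.2 (key _ _ this))
  refine ⟨?_, ?_, nash⟩
  · rintro ⟨f, hf⟩
    have hmono : StrictMono (fun n => φ (f n)) :=
      strictMono_nat_of_lt_succ fun n => key _ _ (hf n)
    have hinj : Function.Injective f := fun m n h => hmono.injective (by simp [h])
    obtain ⟨m, n, hmn, heq⟩ := Finite.exists_ne_map_eq_of_infinite f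
    exact hmn (hinj heq)
  · intro s hns i a
    by_contra h
    push_neg at h
    exact hns ⟨Function.update s i a, (hStep _ _).2 ⟨i, a, rfl, h⟩⟩
end

section
/- Let H be the softmax Jacobian at strategy σ (H[i,i] = σ_i ∑_{j≠i} σ_j, H[i,j] = −σ_i σ_j for i ≠ j) and let y ∈ ℝ^n be the innovation vector with y_j = 1 − σ_j for the observed action j and y_i = −σ_i for i ≠ j. Then the j-th component of H·y is strictly positive. -/
/-- After observing action `j`, the `j`-th component of the softmax-Jacobian
innovation product `H·y` is strictly positive. -/
theorem stmt_9 (n : ℕ) (hn : 2 ≤ n) (σ : Fin n → ℝ)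
    (hσpos : ∀ k, 0 < σ k) (hσsum : ∑ k, σ k = 1) (j : Fin n)
    (H : Fin n → Fin n → ℝ)
    (hHdiag : ∀ i : Fin n, H i i = σ i * ∑ k ∈ Finset.univ.erase i, σ k)
    (hHoff : ∀ i k : Fin n, i ≠ k → H i k = -(σ i * σ k))
    (y : Fin n → ℝ)
    (hyj : y j = 1 - σ j) (hyi : ∀ i : Fin n, i ≠ j → y i = -σ i) :
    0 < ∑ k, H j k * y k := by
  have herase : ∑ k ∈ Finset.univ.erase j, σ k = 1 - σ j := by
    have h := Finset.add_sum_erase Finset.univ σ (Finset.mem_univ j)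
    rw [hσsum] at h
    linarith
  have hsplit : ∑ k, H j k * y k
      = H j j * y j + ∑ k ∈ Finset.univ.erase j, H j k * y k :=
    (Finset.add_sum_erase Finset.univ (fun k => H j k * y k) (Finset.mem_univ j)).symm
  have hterm : ∀ k ∈ Finset.univ.erase j, H j k * y k = σ j * σ k ^ 2 := by
    intro k hk
    have hkj : k ≠ j := Finset.ne_of_mem_erase hk
    rw [hHoff j k (Ne.symm hkj), hyi k hkj]; ring
  rw [hsplit, Finset.sum_congr rfl hterm, hHdiag, herase, hyj]
  have hpos : 0 < ∑ k ∈ Finset.univ.erase j, σ j * σ k ^ 2 := by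
    have : Nontrivial (Fin n) := Fin.nontrivial_iff_two_le.mpr hn
    obtain ⟨i, hi⟩ := exists_ne j
    exact Finset.sum_pos' (fun k _ => le_of_lt (mul_pos (hσpos j) (pow_pos (hσpos k) 2)))
      ⟨i, Finset.mem_erase.mpr ⟨hi, Finset.mem_univ i⟩, mul_pos (hσpos j) (pow_pos (hσpos i) 2)⟩
  nlinarith [sq_nonneg (1 - σ j), (hσpos j)]
end

section
/- If in a fictitious-play process the empirical belief profile converges to some mixed strategy profile σ̂ and each player always plays a best response to current beliefs, then σ̂ is a Nash equilibrium. -/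
open Finset Filter

/-- Expected reward of player `i` under a mixed strategy profile `σ`. -/
noncomputable def mixedRew {ι : Type*} [Fintype ι] [DecidableEq ι]
    {S : ι → Type*} [∀ i, Fintype (S i)] [∀ i, DecidableEq (S i)]
    (r : ι → (∀ i, S i) → ℝ) (σ : ∀ j : ι, S j → ℝ) (i : ι) : ℝ :=
  ∑ s : ∀ j, S j, (∏ j, σ j (s j)) * r i s

/-- Dirac (pure) strategy on action `a`. -/
noncomputable def pureStrat {α : Type*} [DecidableEq α] (a : α) : α → ℝ :=
  fun b => if b = a then 1 else 0


lemma prod_update_eq {ι : Type*} [Fintype ι] [DecidableEq ι]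
    {S : ι → Type*} (σ : ∀ j : ι, S j → ℝ) (i : ι) (ρ : S i → ℝ)
    (s : ∀ j, S j) :
    (∏ j, (Function.update σ i ρ) j (s j)) =
      ρ (s i) * ∏ j ∈ Finset.univ.erase i, σ j (s j) := by
  rw [← Finset.mul_prod_erase Finset.univ (fun j => (Function.update σ i ρ) j (s j))
        (Finset.mem_univ i)]
  rw [Function.update_self]
  congr 1
  apply Finset.prod_congr rfl
  intro j hj
  rw [Function.update_of_ne (Finset.ne_of_mem_erase hj)]

lemma mixedRew_update {ι : Type*} [Fintype ι] [DecidableEq ι]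
    {S : ι → Type*} [∀ i, Fintype (S i)] [∀ i, DecidableEq (S i)]
    (r : ι → (∀ i, S i) → ℝ) (σ : ∀ j : ι, S j → ℝ) (i : ι) (τ : S i → ℝ) :
    mixedRew r (Function.update σ i τ) i =
      ∑ a, τ a * mixedRew r (Function.update σ i (pureStrat a)) i := by
  simp only [mixedRew, prod_update_eq, pureStrat, Finset.mul_sum]
  rw [Finset.sum_comm]
  refine Finset.sum_congr rfl fun s _ => ?_
  rw [Finset.sum_eq_single (s i)]
  · simp [mul_assoc]
  · intro a _ ha
    simp [Ne.symm ha]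
  · simp

lemma mixedRew_self {ι : Type*} [Fintype ι] [DecidableEq ι]
    {S : ι → Type*} [∀ i, Fintype (S i)] [∀ i, DecidableEq (S i)]
    (r : ι → (∀ i, S i) → ℝ) (σ : ∀ j : ι, S j → ℝ) (i : ι) :
    mixedRew r σ i =
      ∑ a, σ i a * mixedRew r (Function.update σ i (pureStrat a)) i := by
  have := mixedRew_update r σ i (σ i)
  rwa [Function.update_eq_self] at this

lemma mixedRew_tendsto {ι : Type*} [Fintype ι] [DecidableEq ι]
    {S : ι → Type*} [∀ i, Fintype (S i)] [∀ i, DecidableEq (S i)]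
    (r : ι → (∀ i, S i) → ℝ) (σt : ℕ → ∀ j : ι, S j → ℝ) (σhat : ∀ j : ι, S j → ℝ)
    (hconv : ∀ (j : ι) (a : S j),
      Tendsto (fun t => σt t j a) atTop (nhds (σhat j a)))
    (i : ι) (a : S i) :
    Tendsto (fun t => mixedRew r (Function.update (σt t) i (pureStrat a)) i)
      atTop (nhds (mixedRew r (Function.update σhat i (pureStrat a)) i)) := by
  unfold mixedRew
  apply tendsto_finset_sum
  intro s _
  apply Tendsto.mul _ tendsto_const_nhds
  apply tendsto_finset_prod
  intro j _
  by_cases hj : j = i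
  · subst hj; simp only [Function.update_self]; exact tendsto_const_nhds
  · simp only [Function.update_of_ne hj]; exact hconv j (s j)


/-- If beliefs converge to `σ̂`, each player always plays a pure best response to
current beliefs, and beliefs are consistent with empirical play frequencies,
then `σ̂` is a Nash equilibrium. -/
theorem stmt_12 {ι : Type*} [Fintype ι] [DecidableEq ι]
    {S : ι → Type*} [∀ i, Fintype (S i)] [∀ i, DecidableEq (S i)]
    (r : ι → (∀ i, S i) → ℝ)
    (σt : ℕ → ∀ j : ι, S j → ℝ) (σhat : ∀ j : ι, S j → ℝ)
    (hprob : ∀ t j, (∀ a, 0 ≤ σt t j a) ∧ ∑ a, σt t j a = 1)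
    (hprobhat : ∀ j, (∀ a, 0 ≤ σhat j a) ∧ ∑ a, σhat j a = 1)
    (hconv : ∀ (j : ι) (a : S j),
      Tendsto (fun t => σt t j a) atTop (nhds (σhat j a)))
    (play : ℕ → ∀ i, S i)
    (hbr : ∀ (t : ℕ) (i : ι) (a : S i),
      mixedRew r (Function.update (σt t) i (pureStrat a)) i ≤
        mixedRew r (Function.update (σt t) i (pureStrat (play t i))) i)
    (hconsist : ∀ (i : ι) (a : S i),
      Tendsto (fun T : ℕ =>
          ((Finset.range T).filter (fun t => play t i = a)).card / (T : ℝ))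
        atTop (nhds (σhat i a))) :
    ∀ (i : ι) (τ : S i → ℝ), (∀ a, 0 ≤ τ a) → (∑ a, τ a = 1) →
      mixedRew r (Function.update σhat i τ) i ≤ mixedRew r σhat i := by
  intro i τ hτ0 hτ1
  set g : S i → ℝ := fun a => mixedRew r (Function.update σhat i (pureStrat a)) i with hg
  -- if σhat i a > 0 then g b ≤ g a for all b
  have key : ∀ a : S i, 0 < σhat i a → ∀ b : S i, g b ≤ g a := by
    intro a ha b
    -- a is played infinitely often
    have hinf : {t | play t i = a}.Infinite := by
      by_contra hfin
      rw [Set.not_infinite] at hfin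
      have hbound : ∀ T : ℕ,
          ((Finset.range T).filter (fun t => play t i = a)).card ≤ hfin.toFinset.card := by
        intro T
        apply Finset.card_le_card
        intro t ht
        simp only [Finset.mem_filter] at ht
        simp [Set.Finite.mem_toFinset, ht.2]
      have h0 : Tendsto (fun T : ℕ =>
          ((Finset.range T).filter (fun t => play t i = a)).card / (T : ℝ)) atTop (nhds 0) := by
        apply squeeze_zero (fun T => by positivity)
          (g := fun T : ℕ => (hfin.toFinset.card : ℝ) / T)
        · intro T
          rcases Nat.eq_zero_or_pos T with h | h
          · simp [h]
          · exact div_le_div_of_nonneg_right (by exact_mod_cast hbound T)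
              (by positivity)
        · exact tendsto_const_div_atTop_nhds_zero_nat _
      have := tendsto_nhds_unique (hconsist i a) h0
      linarith
    have hfreq : ∃ᶠ t in atTop, play t i = a :=
      Nat.frequently_atTop_iff_infinite.2 hinf
    -- limit comparison along the frequent set
    have hle : ∀ t, play t i = a →
        mixedRew r (Function.update (σt t) i (pureStrat b)) i ≤
          mixedRew r (Function.update (σt t) i (pureStrat a)) i := by
      intro t ht
      have := hbr t i b
      rwa [ht] at this
    by_contra hlt
    push_neg at hlt
    have hb := mixedRew_tendsto r σt σhat hconv i b
    have ha' := mixedRew_tendsto r σt σhat hconv i a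
    have hd : Tendsto (fun t => mixedRew r (Function.update (σt t) i (pureStrat b)) i
        - mixedRew r (Function.update (σt t) i (pureStrat a)) i) atTop (nhds (g b - g a)) :=
      hb.sub ha'
    have hev : ∀ᶠ t in atTop, (0:ℝ) < mixedRew r (Function.update (σt t) i (pureStrat b)) i
        - mixedRew r (Function.update (σt t) i (pureStrat a)) i := by
      have : (0:ℝ) < g b - g a := by linarith
      exact hd.eventually (eventually_gt_nhds this) |>.mono (fun t ht => ht)
    obtain ⟨t, ht1, ht2⟩ := (hfreq.and_eventually hev).exists
    have := hle t ht1
    linarith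
  -- pick a0 with positive weight
  obtain ⟨a0, -, ha0⟩ := Finset.exists_ne_zero_of_sum_ne_zero
    (f := σhat i) (s := Finset.univ) (by rw [(hprobhat i).2]; norm_num)
  have ha0pos : 0 < σhat i a0 := lt_of_le_of_ne ((hprobhat i).1 a0) (Ne.symm ha0)
  rw [mixedRew_update, mixedRew_self r σhat i]
  calc ∑ a, τ a * g a ≤ ∑ a, τ a * g a0 := by
        apply Finset.sum_le_sum
        intro a _
        exact mul_le_mul_of_nonneg_left (key a0 ha0pos a) (hτ0 a)
    _ = g a0 := by rw [← Finset.sum_mul, hτ1, one_mul]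
    _ = ∑ a, σhat i a * g a := by
        rw [Finset.sum_congr rfl (fun a _ => ?_)]
        · rw [← Finset.sum_mul, (hprobhat i).2, one_mul]
        · rcases eq_or_lt_of_le ((hprobhat i).1 a) with h | h
          · rw [← h]; ring
          · rw [le_antisymm (key a0 ha0pos a) (key a h a0)]
end
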